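/- The finite Tribonacci words satisfy: for n ≥ 2, Y_n is the prefix of length T_n of the infinite Tribonacci word T. -/
import Mathlib

/-- The Tribonacci morphism: 0 → 01, 1 → 02, 2 → 0. -/
def tribMap (c : ℕ) : List ℕ := if c = 0 then [0,1] else if c = 1 then [0,2] else [0]

/-- Iterates of the Tribonacci morphism on the word `0`. -/
def tribIter : ℕ → List ℕ
  | 0 => [0]
  | k+1 => (tribIter k).flatMap tribMap

/-- The infinite Tribonacci word, the fixed point starting with 0 of 0→01, 1→02, 2→0. -/
def tribWord (n : ℕ) : ℕ := (tribIter (n+1)).getD n 0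

/-- The Tribonacci numbers. -/
def trib : ℕ → ℕ
  | 0 => 0
  | 1 => 1
  | 2 => 1
  | n+3 => trib (n+2) + trib (n+1) + trib n

/-- The finite Tribonacci words: `Y_0 = ε`, `Y_1 = 2`, `Y_2 = 0`, `Y_3 = 01`,
`Y_n = Y_{n-1} Y_{n-2} Y_{n-3}` for `n ≥ 4`. -/
def Y : ℕ → List ℕ
  | 0 => []
  | 1 => [2]
  | 2 => [0]
  | 3 => [0, 1]
  | n+4 => Y (n+3) ++ Y (n+2) ++ Y (n+1)

lemma Y_flatMap : ∀ n, Y (n+2) = (Y (n+1)).flatMap tribMap := by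
  intro n
  induction n using Nat.strong_induction_on with
  | _ n ih =>
    match n with
    | 0 => rfl
    | 1 => rfl
    | 2 => rfl
    | n+3 =>
      have h1 : Y (n+5) = Y (n+4) ++ Y (n+3) ++ Y (n+2) := rfl
      have h2 : Y (n+4) = Y (n+3) ++ Y (n+2) ++ Y (n+1) := rfl
      rw [h2, List.flatMap_append, List.flatMap_append,
        ← ih n (by omega), ← ih (n+1) (by omega), ← ih (n+2) (by omega)]
      exact h1

lemma tribIter_eq_Y : ∀ k, tribIter k = Y (k+2) := by
  intro k
  induction k with
  | zero => rfl
  | succ k ih => rw [tribIter, ih, ← Y_flatMap]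

lemma length_Y : ∀ n, (Y n).length = trib n := by
  intro n
  induction n using Nat.strong_induction_on with
  | _ n ih =>
    match n with
    | 0 => rfl
    | 1 => rfl
    | 2 => rfl
    | 3 => rfl
    | n+4 =>
      have h1 : Y (n+4) = Y (n+3) ++ Y (n+2) ++ Y (n+1) := rfl
      have h2 : trib (n+4) = trib (n+3) + trib (n+2) + trib (n+1) := rfl
      rw [h1]
      simp only [List.length_append]
      rw [ih (n+3) (by omega), ih (n+2) (by omega), ih (n+1) (by omega), h2]

lemma trib_pos : ∀ n, 1 ≤ trib (n+1) := by
  intro n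
  induction n using Nat.strong_induction_on with
  | _ n ih =>
    match n with
    | 0 => exact le_refl 1
    | 1 => exact le_refl 1
    | n+2 =>
      show 1 ≤ trib (n+3)
      have h : trib (n+3) = trib (n+2) + trib (n+1) + trib n := rfl
      have h2 : trib (n+1+1) = trib (n+2) := rfl
      have := ih (n+1) (by omega)
      omega

lemma lt_trib : ∀ n, n < trib (n+2) := by
  intro n
  induction n with
  | zero => exact Nat.zero_lt_one
  | succ n ih =>
    show n+1 < trib (n+3)
    have h : trib (n+3) = trib (n+2) + trib (n+1) + trib n := rfl
    have := trib_pos n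
    omega

lemma trib_le_succ (n : ℕ) : trib (n+2) ≤ trib (n+3) := by
  have h : trib (n+3) = trib (n+2) + trib (n+1) + trib n := rfl
  omega

lemma tribIter_prefix_succ : ∀ k, tribIter k <+: tribIter (k+1) := by
  intro k
  match k with
  | 0 => exact ⟨[1], rfl⟩
  | k+1 =>
    rw [tribIter_eq_Y (k+1), tribIter_eq_Y (k+2)]
    show Y (k+3) <+: Y (k+4)
    have h : Y (k+4) = Y (k+3) ++ (Y (k+2) ++ Y (k+1)) := by
      have : Y (k+4) = Y (k+3) ++ Y (k+2) ++ Y (k+1) := rfl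
      rw [this, List.append_assoc]
    exact ⟨_, h.symm⟩

lemma tribIter_prefix {k m : ℕ} (h : k ≤ m) : tribIter k <+: tribIter m := by
  induction m with
  | zero => simp_all
  | succ m ih =>
    rcases Nat.lt_or_ge k (m+1) with h' | h'
    · exact (ih (by omega)).trans (tribIter_prefix_succ m)
    · have : k = m+1 := by omega
      subst this; exact List.prefix_refl _

lemma length_tribIter (k : ℕ) : (tribIter k).length = trib (k+2) := by
  rw [tribIter_eq_Y, length_Y]

lemma tribWord_eq (k i : ℕ) (h : i < (tribIter k).length) :
    tribWord i = (tribIter k)[i] := by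
  have hi : i < (tribIter (i+1)).length := by
    rw [length_tribIter]
    exact lt_of_lt_of_le (lt_trib i) (trib_le_succ i)
  have : tribWord i = (tribIter (i+1))[i] := by
    unfold tribWord
    exact List.getD_eq_getElem _ _ hi
  rw [this]
  rcases Nat.le_total k (i+1) with h' | h'
  · exact ((tribIter_prefix h').getElem h).symm
  · exact (tribIter_prefix h').getElem hi

/-- For `n ≥ 2`, the finite Tribonacci word `Y_n` is the prefix of length `T_n`
of the infinite Tribonacci word. -/
theorem Y_eq_prefix (n : ℕ) (hn : 2 ≤ n) :
    Y n = (List.range (trib n)).map tribWord := by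
  obtain ⟨m, rfl⟩ : ∃ m, n = m + 2 := ⟨n - 2, by omega⟩
  rw [← tribIter_eq_Y m]
  apply List.ext_getElem
  · simp [length_tribIter]
  · intro i h1 h2
    simp only [List.getElem_map, List.getElem_range]
    exact (tribWord_eq m i h1).symm
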